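/- Sufficient optimality condition for the fourth-order polyhedral problem (PFC) (Theorem 5.1 of Section 5.2, with the sign conventions of the locally adjoint mapping computed via Farkas' theorem). Let A and E be real m×n matrices, d ∈ ℝ^m, f : ℝⁿ × ℝⁿ → ℝ convex, S ⊆ ℝⁿ × ℝⁿ convex, and X(t) ⊆ ℝⁿ convex for t ∈ [0,T]. A feasible solution is x : ℝ → ℝⁿ three-times differentiable with x'''(t) = x'''(0) + ∫₀ᵗ v(s)ds on [0,T] for an integrable v (written x^{(4)} := v) with A x(t) − E v(t) ≤ d a.e. on [0,T], (x^{(j)}(0), x^{(j)}(T)) ∈ S for j = 0,1,2,3, and x(t) ∈ X(t) for all t ∈ [0,T]. Let (x̃, ṽ) be feasible and suppose there is λ : [0,T] → ℝ^m with λ(t) ≥ 0 for a.e. t, such that x*(t) := −Eᵀ λ(t) is three-times differentiable with x*'''(t) = x*'''(0) + ∫₀ᵗ w(s)ds on [0,T] for an integrable w, and: (1) −w(t) = Aᵀ λ(t) and ⟨A x̃(t) − E ṽ(t) − d, λ(t)⟩ = 0 for a.e. t ∈ [0,T]; (2) there exist p ∈ ∂f(x̃(0), x̃(T)) and μ* ∈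 K_S*(x̃(0), x̃(T)) with (−x*'''(0), x*'''(T)) = p − μ*, and ((−1)^{j+1} x*^{(j)}(0), (−1)^j x*^{(j)}(T)) ∈ K_S*(x̃^{(3−j)}(0), x̃^{(3−j)}(T)) for j = 0,1,2. Then f(x(0), x(T)) ≥ f(x̃(0), x̃(T)) for every feasible solution x. -/
import Mathlib
open MeasureTheory Matrix Set
lemma triangle_swap {T : ℝ} {f g : ℝ → ℝ}
    (hf : IntegrableOn f (Ioc 0 T)) (hg : IntegrableOn g (Ioc 0 T)) :
    ∫ t in Ioc (0:ℝ) T, f t * ∫ s in Ioc t T, g s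
      = ∫ s in Ioc (0:ℝ) T, (∫ t in Ioc (0:ℝ) s, f t) * g s := by
  set F := (Ioc (0:ℝ) T).indicator f with hFdef
  set G := (Ioc (0:ℝ) T).indicator g with hGdef
  have hFi : Integrable F := (integrable_indicator_iff measurableSet_Ioc).mpr hf
  have hGi : Integrable G := (integrable_indicator_iff measurableSet_Ioc).mpr hg
  have hprod : Integrable (fun p : ℝ × ℝ => F p.1 * G p.2) (volume.prod volume) :=
    hFi.mul_prod hGi
  have hmeas : MeasurableSet {p : ℝ × ℝ | p.1 < p.2} :=
    measurableSet_lt measurable_fst measurable_snd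
  set H : ℝ × ℝ → ℝ := {p : ℝ × ℝ | p.1 < p.2}.indicator (fun p => F p.1 * G p.2) with hHdef
  have hHi : Integrable H (volume.prod volume) := hprod.indicator hmeas
  have hswap : ∫ t, ∫ s, H (t, s) = ∫ s, ∫ t, H (t, s) :=
    integral_integral_swap (f := fun t s => H (t, s)) hHi
  have hleft : ∀ t, (∫ s, H (t, s)) =
      (Ioc (0:ℝ) T).indicator (fun t => f t * ∫ s in Ioc t T, g s) t := by
    intro t
    by_cases ht : t ∈ Ioc (0:ℝ) T
    · have hpt : ∀ s, H (t, s) = f t * (Ioc t T).indicator g s := by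
        intro s
        simp only [hHdef, hGdef, hFdef, Set.indicator_apply, mem_setOf_eq, mem_Ioc]
        by_cases hts : t < s
        · simp only [hts, if_true]
          have h0s : (0:ℝ) < s := lt_trans ht.1 hts
          by_cases hsT : s ≤ T
          · simp [h0s, hsT, ht.1, ht.2, hts]
          · simp [hsT, hts]
        · simp [hts]
      rw [Set.indicator_of_mem ht]
      simp only [hpt]
      rw [integral_const_mul, integral_indicator measurableSet_Ioc]
    · have hF0 : F t = 0 := Set.indicator_of_notMem ht _
      have hpt : ∀ s, H (t, s) = 0 := by
        intro s
        simp only [hHdef, Set.indicator_apply, mem_setOf_eq, hF0, zero_mul, if_pos, ite_self]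
      rw [Set.indicator_of_notMem ht]
      simp [hpt]
  have hright : ∀ s, (∫ t, H (t, s)) =
      (Ioc (0:ℝ) T).indicator (fun s => (∫ t in Ioc (0:ℝ) s, f t) * g s) s := by
    intro s
    by_cases hs : s ∈ Ioc (0:ℝ) T
    · have hpt : ∀ t, H (t, s) = (Ioo (0:ℝ) s).indicator f t * g s := by
        intro t
        simp only [hHdef, hGdef, hFdef, Set.indicator_apply, mem_setOf_eq, mem_Ioc, mem_Ioo]
        by_cases hts : t < s
        · have htT : t < s → t ≤ T := fun h => le_trans (le_of_lt h) hs.2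
          by_cases h0t : 0 < t
          · simp [hts, h0t, htT hts, hs.1, hs.2]
          · simp [hts, h0t, hs.1, hs.2]
        · have : ¬ (0 < t ∧ t < s) := fun h => hts h.2
          simp [hts, this]
      rw [Set.indicator_of_mem hs]
      simp only [hpt]
      rw [integral_mul_const, integral_indicator measurableSet_Ioo]
      rw [← integral_Ioc_eq_integral_Ioo]
    · have hG0 : G s = 0 := Set.indicator_of_notMem hs _
      have hpt : ∀ t, H (t, s) = 0 := by
        intro t
        simp only [hHdef, Set.indicator_apply, mem_setOf_eq, hG0, mul_zero, ite_self]
      rw [Set.indicator_of_notMem hs]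
      simp [hpt]
  calc ∫ t in Ioc (0:ℝ) T, f t * ∫ s in Ioc t T, g s
      = ∫ t, (Ioc (0:ℝ) T).indicator (fun t => f t * ∫ s in Ioc t T, g s) t := by
        rw [integral_indicator measurableSet_Ioc]
    _ = ∫ t, ∫ s, H (t, s) := by simp_rw [hleft]
    _ = ∫ s, ∫ t, H (t, s) := hswap
    _ = ∫ s, (Ioc (0:ℝ) T).indicator (fun s => (∫ t in Ioc (0:ℝ) s, f t) * g s) s := by
        simp_rw [hright]
    _ = ∫ s in Ioc (0:ℝ) T, (∫ t in Ioc (0:ℝ) s, f t) * g s := by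
        rw [integral_indicator measurableSet_Ioc]

lemma parts_scalar {T : ℝ} (hT : 0 < T) {G F g f : ℝ → ℝ}
    (hG : ∀ t, HasDerivAt G (g t) t)
    (hg : IntervalIntegrable g volume 0 T)
    (hf : IntervalIntegrable f volume 0 T)
    (hF : ∀ t ∈ Icc (0:ℝ) T, F t = F 0 + ∫ s in (0:ℝ)..t, f s) :
    (∫ t in (0:ℝ)..T, G t * f t) + (∫ t in (0:ℝ)..T, g t * F t)
      = G T * F T - G 0 * F 0 := by
  have huIcc : uIcc (0:ℝ) T = Icc 0 T := uIcc_of_le hT.le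
  have hGc : Continuous G := by
    rw [continuous_iff_continuousAt]; exact fun t => (hG t).continuousAt
  -- G T - G t = ∫ s in Ioc t T, g s  for t ∈ Icc 0 T
  have hGrep : ∀ t ∈ Icc (0:ℝ) T, G T - G t = ∫ s in Ioc t T, g s := by
    intro t ht
    have hsub : uIcc t T ⊆ uIcc (0:ℝ) T :=
      uIcc_subset_uIcc (by rw [huIcc]; exact ht) (by rw [huIcc]; exact right_mem_Icc.mpr hT.le)
    have := intervalIntegral.integral_eq_sub_of_hasDerivAt (f := G) (f' := g)
      (fun s _ => hG s) (hg.mono_set hsub)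
    rw [← this, intervalIntegral.integral_of_le ht.2]
  -- primitive of f is continuous on Icc
  have hfI : IntegrableOn f (Icc 0 T) :=
    (intervalIntegrable_iff_integrableOn_Icc_of_le hT.le).mp hf
  have hprim : ContinuousOn (fun t => ∫ s in (0:ℝ)..t, f s) (Icc 0 T) := by
    have := intervalIntegral.continuousOn_primitive_interval (μ := volume) (a := (0:ℝ)) (b := T) (f := f) (by rw [huIcc]; exact hfI)
    rwa [huIcc] at this
  have hFc : ContinuousOn F (Icc 0 T) :=
    (continuousOn_const.add hprim).congr hF
  -- key integrabilities
  have hGf : IntervalIntegrable (fun t => G t * f t) volume 0 T :=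
    hf.continuousOn_mul hGc.continuousOn
  have hgF : IntervalIntegrable (fun t => g t * F t) volume 0 T := by
    refine hg.mul_continuousOn ?_
    rw [huIcc]; exact hFc
  have hfG : IntervalIntegrable (fun t => f t * G t) volume 0 T :=
    hf.mul_continuousOn hGc.continuousOn
  -- ∫ f over [0,T]
  have hintf : ∫ t in Ioc (0:ℝ) T, f t = F T - F 0 := by
    rw [← intervalIntegral.integral_of_le hT.le]
    have := hF T (right_mem_Icc.mpr hT.le); rw [this]; ring
  have hintg : ∫ t in Ioc (0:ℝ) T, g t = G T - G 0 := by
    have := hGrep 0 (left_mem_Icc.mpr hT.le); rw [← this]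
  -- compute ∫ g F
  have step1 : ∫ t in (0:ℝ)..T, g t * F t
      = F 0 * (G T - G 0) + ∫ t in Ioc (0:ℝ) T, g t * ∫ s in Ioc (0:ℝ) t, f s := by
    rw [intervalIntegral.integral_of_le hT.le]
    have hEq : ∀ t ∈ Ioc (0:ℝ) T, g t * F t
        = g t * F 0 + g t * ∫ s in Ioc (0:ℝ) t, f s := by
      intro t ht
      rw [hF t (Ioc_subset_Icc_self ht), ← intervalIntegral.integral_of_le ht.1.le]
      ring
    rw [setIntegral_congr_fun measurableSet_Ioc hEq]
    have hgint : IntegrableOn (fun t => g t * F 0) (Ioc 0 T) := by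
      exact (hg.1.mul_const _)
    have hgP : IntegrableOn (fun t => g t * ∫ s in Ioc (0:ℝ) t, f s) (Ioc 0 T) := by
      have : IntervalIntegrable (fun t => g t * ∫ s in (0:ℝ)..t, f s) volume 0 T := by
        refine hg.mul_continuousOn ?_
        rw [huIcc]; exact hprim
      refine (this.1).congr_fun ?_ measurableSet_Ioc
      intro t ht
      simp only []
      rw [intervalIntegral.integral_of_le ht.1.le]
    rw [integral_add hgint hgP, integral_mul_const]
    congr 1
    rw [hintg]; ring
  -- use triangle swap
  have step2 : ∫ t in Ioc (0:ℝ) T, g t * ∫ s in Ioc (0:ℝ) t, f s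
      = ∫ t in Ioc (0:ℝ) T, f t * ∫ s in Ioc t T, g s := by
    rw [triangle_swap hf.1 hg.1]
    apply setIntegral_congr_fun measurableSet_Ioc
    intro t _
    ring
  have step3 : ∫ t in Ioc (0:ℝ) T, f t * ∫ s in Ioc t T, g s
      = G T * (F T - F 0) - ∫ t in (0:ℝ)..T, G t * f t := by
    have hEq : ∀ t ∈ Ioc (0:ℝ) T, f t * ∫ s in Ioc t T, g s
        = G T * f t - f t * G t := by
      intro t ht
      rw [← hGrep t (Ioc_subset_Icc_self ht)]
      ring
    rw [setIntegral_congr_fun measurableSet_Ioc hEq]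
    rw [integral_sub ((hf.1).const_mul _) ?hfg]
    case hfg =>
      have := hfG.1; exact this
    rw [integral_const_mul, hintf]
    congr 1
    rw [intervalIntegral.integral_of_le hT.le]
    apply setIntegral_congr_fun measurableSet_Ioc
    intro t _; ring
  rw [step1, step2, step3]
  ring

lemma comp_ii {n : ℕ} {a b : ℝ} {f : ℝ → Fin n → ℝ}
    (hf : IntervalIntegrable f volume a b) (i : Fin n) :
    IntervalIntegrable (fun t => f t i) volume a b :=
  ⟨(ContinuousLinearMap.proj (R := ℝ) (φ := fun _ : Fin n => ℝ) i).integrable_comp hf.1,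
   (ContinuousLinearMap.proj (R := ℝ) (φ := fun _ : Fin n => ℝ) i).integrable_comp hf.2⟩

lemma dot_ii {n : ℕ} {T : ℝ} {G f : ℝ → Fin n → ℝ}
    (hG : ContinuousOn G (uIcc 0 T)) (hf : IntervalIntegrable f volume 0 T) :
    IntervalIntegrable (fun t => G t ⬝ᵥ f t) volume 0 T := by
  have h := IntervalIntegrable.sum (μ := volume) (a := 0) (b := T) Finset.univ
    (f := fun (i : Fin n) (t : ℝ) => G t i * f t i)
    (fun i _ => (comp_ii hf i).continuousOn_mul ((continuous_apply i).comp_continuousOn hG))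
  have he : (fun t => G t ⬝ᵥ f t) = (∑ i : Fin n, fun t => G t i * f t i) := by
    funext t
    rw [Finset.sum_apply]
    rfl
  rw [he]
  exact h

lemma parts_vec {n : ℕ} {T : ℝ} (hT : 0 < T) {G F g f : ℝ → Fin n → ℝ}
    (hG : ∀ t, HasDerivAt G (g t) t)
    (hg : IntervalIntegrable g volume 0 T)
    (hf : IntervalIntegrable f volume 0 T)
    (hF : ∀ t ∈ Icc (0:ℝ) T, F t = F 0 + ∫ s in (0:ℝ)..t, f s) :
    (∫ t in (0:ℝ)..T, G t ⬝ᵥ f t) + (∫ t in (0:ℝ)..T, g t ⬝ᵥ F t)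
      = G T ⬝ᵥ F T - G 0 ⬝ᵥ F 0 := by
  have huIcc : uIcc (0:ℝ) T = Icc 0 T := uIcc_of_le hT.le
  have hGi : ∀ i, ∀ t, HasDerivAt (fun t => G t i) (g t i) t :=
    fun i t => hasDerivAt_pi.mp (hG t) i
  have hgi : ∀ i, IntervalIntegrable (fun t => g t i) volume 0 T := comp_ii hg
  have hfi : ∀ i, IntervalIntegrable (fun t => f t i) volume 0 T := comp_ii hf
  have hFi : ∀ i, ∀ t ∈ Icc (0:ℝ) T, F t i = F 0 i + ∫ s in (0:ℝ)..t, f s i := by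
    intro i t ht
    have h := congrFun (hF t ht) i
    have hsub : uIcc (0:ℝ) t ⊆ uIcc (0:ℝ) T :=
      uIcc_subset_uIcc left_mem_uIcc (by rw [huIcc]; exact ht)
    have happ : (∫ s in (0:ℝ)..t, f s) i = ∫ s in (0:ℝ)..t, f s i :=
      (ContinuousLinearMap.intervalIntegral_comp_comm
        (ContinuousLinearMap.proj (R := ℝ) (φ := fun _ : Fin n => ℝ) i) (hf.mono_set hsub)).symm
    rw [h, Pi.add_apply, happ]
  have hGc : ∀ i, Continuous (fun t => G t i) := by
    intro i
    rw [continuous_iff_continuousAt]; exact fun t => (hGi i t).continuousAt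
  have hFc : ∀ i, ContinuousOn (fun t => F t i) (Icc 0 T) := by
    intro i
    have hfI : IntegrableOn (fun t => f t i) (Icc 0 T) :=
      (intervalIntegrable_iff_integrableOn_Icc_of_le hT.le).mp (hfi i)
    have hprim : ContinuousOn (fun t => ∫ s in (0:ℝ)..t, f s i) (Icc 0 T) := by
      have := intervalIntegral.continuousOn_primitive_interval (μ := volume)
        (a := (0:ℝ)) (b := T) (f := fun t => f t i) (by rw [huIcc]; exact hfI)
      rwa [huIcc] at this
    exact (continuousOn_const.add hprim).congr (hFi i)
  have hd : ∀ (a b : ℝ → Fin n → ℝ) (t : ℝ), a t ⬝ᵥ b t = ∑ i : Fin n, a t i * b t i :=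
    fun _ _ _ => rfl
  simp only [hd]
  rw [intervalIntegral.integral_finset_sum (fun i _ =>
        (hfi i).continuousOn_mul (hGc i).continuousOn),
      intervalIntegral.integral_finset_sum (fun i _ =>
        (hgi i).mul_continuousOn (by rw [huIcc]; exact hFc i)),
      ← Finset.sum_add_distrib, ← Finset.sum_sub_distrib]
  exact Finset.sum_congr rfl fun i _ =>
    parts_scalar hT (hGi i) (hgi i) (hfi i) (hFi i)

/-- A feasible solution of the fourth-order polyhedral problem (PFC), with
`v = x⁽⁴⁾` represented by an integrable function. -/
def IsFeasiblePFC (n m : ℕ) (T : ℝ)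
    (A E : Matrix (Fin m) (Fin n) ℝ) (d : Fin m → ℝ)
    (S : Set ((Fin n → ℝ) × (Fin n → ℝ)))
    (X : ℝ → Set (Fin n → ℝ))
    (x v : ℝ → (Fin n → ℝ)) : Prop :=
  (∀ j < 3, Differentiable ℝ (iteratedDeriv j x)) ∧
  IntervalIntegrable v volume 0 T ∧
  (∀ t ∈ Icc (0:ℝ) T,
      iteratedDeriv 3 x t = iteratedDeriv 3 x 0 + ∫ s in (0:ℝ)..t, v s) ∧
  (∀ᵐ t ∂volume, t ∈ Icc (0:ℝ) T → A *ᵥ x t - E *ᵥ v t ≤ d) ∧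
  (∀ j < 4, (iteratedDeriv j x 0, iteratedDeriv j x T) ∈ S) ∧
  (∀ t ∈ Icc (0:ℝ) T, x t ∈ X t)

/-- Theorem 5.1 (Section 5.2): sufficient optimality condition for the
fourth-order polyhedral problem (PFC). -/
theorem sufficient_optimality_polyhedral_fourth_order
    (n m : ℕ) (hn : 1 ≤ n) (hm : 1 ≤ m) (T : ℝ) (hT : 0 < T)
    (A E : Matrix (Fin m) (Fin n) ℝ) (d : Fin m → ℝ)
    (S : Set ((Fin n → ℝ) × (Fin n → ℝ)))
    (X : ℝ → Set (Fin n → ℝ))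
    (f : (Fin n → ℝ) → (Fin n → ℝ) → ℝ)
    (hf : ConvexOn ℝ univ (fun p : (Fin n → ℝ) × (Fin n → ℝ) => f p.1 p.2))
    (hS : Convex ℝ S)
    (hX : ∀ t ∈ Icc (0:ℝ) T, Convex ℝ (X t))
    (xt vt : ℝ → (Fin n → ℝ))
    (hfeas : IsFeasiblePFC n m T A E d S X xt vt)
    -- the multiplier λ and the adjoint arc x* = −Eᵀλ
    (l : ℝ → (Fin m → ℝ))
    (hl : ∀ᵐ t ∂volume, t ∈ Icc (0:ℝ) T → 0 ≤ l t)
    (xs : ℝ → (Fin n → ℝ))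
    (hxsdef : ∀ t, xs t = -(Eᵀ *ᵥ l t))
    (hxsdiff : ∀ j < 3, Differentiable ℝ (iteratedDeriv j xs))
    (w : ℝ → (Fin n → ℝ))
    (hw : IntervalIntegrable w volume 0 T)
    (hxs : ∀ t ∈ Icc (0:ℝ) T,
      iteratedDeriv 3 xs t = iteratedDeriv 3 xs 0 + ∫ s in (0:ℝ)..t, w s)
    -- condition (1): adjoint equation and complementary slackness
    (h1 : ∀ᵐ t ∂volume, t ∈ Icc (0:ℝ) T →
      -w t = Aᵀ *ᵥ l t ∧ (A *ᵥ xt t - E *ᵥ vt t - d) ⬝ᵥ l t = 0)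
    -- condition (2): transversality
    (h2 : ∃ p₀ p₁ μ₀ μ₁ : Fin n → ℝ,
      (∀ y₀ y₁, f (xt 0) (xt T) + (p₀ ⬝ᵥ (y₀ - xt 0) + p₁ ⬝ᵥ (y₁ - xt T)) ≤ f y₀ y₁) ∧
      (∀ s ∈ S, 0 ≤ (s.1 - xt 0) ⬝ᵥ μ₀ + (s.2 - xt T) ⬝ᵥ μ₁) ∧
      -(iteratedDeriv 3 xs 0) = p₀ - μ₀ ∧ iteratedDeriv 3 xs T = p₁ - μ₁)
    (h2' : ∀ j < 3, ∀ s ∈ S,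
      0 ≤ (s.1 - iteratedDeriv (3-j) xt 0) ⬝ᵥ ((-1:ℝ)^(j+1) • iteratedDeriv j xs 0)
        + (s.2 - iteratedDeriv (3-j) xt T) ⬝ᵥ ((-1:ℝ)^j • iteratedDeriv j xs T)) :
    ∀ x v, IsFeasiblePFC n m T A E d S X x v → f (xt 0) (xt T) ≤ f (x 0) (x T) := by
  obtain ⟨hxtd, hvti, hxtrep, _hxtcon, hxtS, _⟩ := hfeas
  obtain ⟨p₀, p₁, μ₀, μ₁, hsubg, hμ, hp0, hp1⟩ := h2
  intro x v hxv
  obtain ⟨hxd, hvi, hxrep, hxcon, hxS, _⟩ := hxv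
  have huIcc : uIcc (0:ℝ) T = Icc 0 T := uIcc_of_le hT.le
  -- generic derivative fact
  have hD : ∀ (z : ℝ → Fin n → ℝ), (∀ j < 3, Differentiable ℝ (iteratedDeriv j z)) →
      ∀ k, k < 3 → ∀ t : ℝ, HasDerivAt (iteratedDeriv k z) (iteratedDeriv (k+1) z t) t := by
    intro z hz k hk t
    rw [iteratedDeriv_succ]
    exact ((hz k hk) t).hasDerivAt
  have hC : ∀ (z : ℝ → Fin n → ℝ), (∀ j < 3, Differentiable ℝ (iteratedDeriv j z)) →
      ∀ k, k < 3 → Continuous (iteratedDeriv k z) := fun z hz k hk => (hz k hk).continuous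
  have hcont3 : ∀ (z u : ℝ → Fin n → ℝ), IntervalIntegrable u volume 0 T →
      (∀ t ∈ Icc (0:ℝ) T, iteratedDeriv 3 z t = iteratedDeriv 3 z 0 + ∫ s in (0:ℝ)..t, u s) →
      ContinuousOn (iteratedDeriv 3 z) (Icc 0 T) := by
    intro z u hu hrep
    have hint : IntegrableOn u (Icc 0 T) :=
      (intervalIntegrable_iff_integrableOn_Icc_of_le hT.le).mp hu
    have hprim : ContinuousOn (fun t => ∫ s in (0:ℝ)..t, u s) (Icc 0 T) := by
      have := intervalIntegral.continuousOn_primitive_interval (μ := volume)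
        (a := (0:ℝ)) (b := T) (f := u) (by rw [huIcc]; exact hint)
      rwa [huIcc] at this
    exact (continuousOn_const.add hprim).congr hrep
  have hx3c : ContinuousOn (iteratedDeriv 3 x) (Icc 0 T) := hcont3 x v hvi hxrep
  have hxt3c : ContinuousOn (iteratedDeriv 3 xt) (Icc 0 T) := hcont3 xt vt hvti hxtrep
  have hxs3c : ContinuousOn (iteratedDeriv 3 xs) (Icc 0 T) := hcont3 xs w hw hxs
  -- FTC representation helper
  have hFTC : ∀ (Z Z' : ℝ → Fin n → ℝ), (∀ t : ℝ, HasDerivAt Z (Z' t) t) →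
      ContinuousOn Z' (Icc 0 T) →
      ∀ t ∈ Icc (0:ℝ) T, Z t = Z 0 + ∫ s in (0:ℝ)..t, Z' s := by
    intro Z Z' hZ hZ' t ht
    have hsub : uIcc (0:ℝ) t ⊆ Icc 0 T := by
      rw [← huIcc]
      exact uIcc_subset_uIcc left_mem_uIcc (by rw [huIcc]; exact ht)
    have hint : IntervalIntegrable Z' volume 0 t := (hZ'.mono hsub).intervalIntegrable
    rw [intervalIntegral.integral_eq_sub_of_hasDerivAt (fun s _ => hZ s) hint]
    abel
  have hYD : ∀ k, k < 3 → ∀ t : ℝ,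
      HasDerivAt (fun t => iteratedDeriv k x t - iteratedDeriv k xt t)
        (iteratedDeriv (k+1) x t - iteratedDeriv (k+1) xt t) t :=
    fun k hk t => (hD x hxd k hk t).sub (hD xt hxtd k hk t)
  have hY3c : ContinuousOn (fun t => iteratedDeriv 3 x t - iteratedDeriv 3 xt t) (Icc 0 T) :=
    hx3c.sub hxt3c
  have hY3rep : ∀ t ∈ Icc (0:ℝ) T,
      (fun t => iteratedDeriv 3 x t - iteratedDeriv 3 xt t) t
        = (fun t => iteratedDeriv 3 x t - iteratedDeriv 3 xt t) 0
          + ∫ s in (0:ℝ)..t, (v s - vt s) := by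
    intro t ht
    have hsub : uIcc (0:ℝ) t ⊆ uIcc 0 T :=
      uIcc_subset_uIcc left_mem_uIcc (by rw [huIcc]; exact ht)
    simp only []
    rw [intervalIntegral.integral_sub (hvi.mono_set hsub) (hvti.mono_set hsub),
      hxrep t ht, hxtrep t ht]
    abel
  have hxs0D : ∀ t : ℝ, HasDerivAt xs (iteratedDeriv 1 xs t) t := by
    intro t
    have := hD xs hxsdiff 0 (by norm_num) t
    rwa [iteratedDeriv_zero] at this
  have hY0D : ∀ t : ℝ, HasDerivAt (fun t => x t - xt t)
      (iteratedDeriv 1 x t - iteratedDeriv 1 xt t) t := by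
    intro t
    have h := hYD 0 (by norm_num) t
    simp only [iteratedDeriv_zero] at h
    exact h
  have hu_int : IntervalIntegrable (fun t => v t - vt t) volume 0 T := hvi.sub hvti
  have hxs1_int : IntervalIntegrable (iteratedDeriv 1 xs) volume 0 T :=
    (hC xs hxsdiff 1 (by norm_num)).intervalIntegrable 0 T
  have hxs2_int : IntervalIntegrable (iteratedDeriv 2 xs) volume 0 T :=
    (hC xs hxsdiff 2 (by norm_num)).intervalIntegrable 0 T
  have hxs3_int : IntervalIntegrable (iteratedDeriv 3 xs) volume 0 T := by
    apply ContinuousOn.intervalIntegrable; rw [huIcc]; exact hxs3c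
  have hY3_int : IntervalIntegrable
      (fun t => iteratedDeriv 3 x t - iteratedDeriv 3 xt t) volume 0 T := by
    apply ContinuousOn.intervalIntegrable; rw [huIcc]; exact hY3c
  have hY2_int : IntervalIntegrable
      (fun t => iteratedDeriv 2 x t - iteratedDeriv 2 xt t) volume 0 T :=
    ((hC x hxd 2 (by norm_num)).sub (hC xt hxtd 2 (by norm_num))).intervalIntegrable 0 T
  have hY1_int : IntervalIntegrable
      (fun t => iteratedDeriv 1 x t - iteratedDeriv 1 xt t) volume 0 T :=
    ((hC x hxd 1 (by norm_num)).sub (hC xt hxtd 1 (by norm_num))).intervalIntegrable 0 T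
  -- four integration by parts identities
  have E0 := parts_vec hT (G := xs) (g := iteratedDeriv 1 xs)
    (F := fun t => iteratedDeriv 3 x t - iteratedDeriv 3 xt t) (f := fun t => v t - vt t)
    hxs0D hxs1_int hu_int hY3rep
  have E1 := parts_vec hT (G := iteratedDeriv 1 xs) (g := iteratedDeriv 2 xs)
    (F := fun t => iteratedDeriv 2 x t - iteratedDeriv 2 xt t)
    (f := fun t => iteratedDeriv 3 x t - iteratedDeriv 3 xt t)
    (hD xs hxsdiff 1 (by norm_num)) hxs2_int hY3_int
    (hFTC _ _ (hYD 2 (by norm_num)) hY3c)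
  have E2 := parts_vec hT (G := iteratedDeriv 2 xs) (g := iteratedDeriv 3 xs)
    (F := fun t => iteratedDeriv 1 x t - iteratedDeriv 1 xt t)
    (f := fun t => iteratedDeriv 2 x t - iteratedDeriv 2 xt t)
    (hD xs hxsdiff 2 (by norm_num)) hxs3_int hY2_int
    (hFTC _ _ (hYD 1 (by norm_num))
      (((hC x hxd 2 (by norm_num)).sub (hC xt hxtd 2 (by norm_num))).continuousOn))
  have E3 := parts_vec hT (G := fun t => x t - xt t)
    (g := fun t => iteratedDeriv 1 x t - iteratedDeriv 1 xt t)
    (F := iteratedDeriv 3 xs) (f := w)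
    hY0D hY1_int hw hxs
  have hIb : (∫ t in (0:ℝ)..T,
        iteratedDeriv 3 xs t ⬝ᵥ (iteratedDeriv 1 x t - iteratedDeriv 1 xt t))
      = ∫ t in (0:ℝ)..T,
        (iteratedDeriv 1 x t - iteratedDeriv 1 xt t) ⬝ᵥ iteratedDeriv 3 xs t :=
    intervalIntegral.integral_congr (fun t _ => dotProduct_comm _ _)
  have hkey : (∫ t in (0:ℝ)..T, xs t ⬝ᵥ (v t - vt t))
      - (∫ t in (0:ℝ)..T, (x t - xt t) ⬝ᵥ w t)
      = (xs T ⬝ᵥ (iteratedDeriv 3 x T - iteratedDeriv 3 xt T)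
          - xs 0 ⬝ᵥ (iteratedDeriv 3 x 0 - iteratedDeriv 3 xt 0))
        - (iteratedDeriv 1 xs T ⬝ᵥ (iteratedDeriv 2 x T - iteratedDeriv 2 xt T)
          - iteratedDeriv 1 xs 0 ⬝ᵥ (iteratedDeriv 2 x 0 - iteratedDeriv 2 xt 0))
        + (iteratedDeriv 2 xs T ⬝ᵥ (iteratedDeriv 1 x T - iteratedDeriv 1 xt T)
          - iteratedDeriv 2 xs 0 ⬝ᵥ (iteratedDeriv 1 x 0 - iteratedDeriv 1 xt 0))
        - ((x T - xt T) ⬝ᵥ iteratedDeriv 3 xs T - (x 0 - xt 0) ⬝ᵥ iteratedDeriv 3 xs 0) := by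
    linear_combination E0 - E1 + E2 - E3 - hIb
  -- the integral is nonpositive
  have hxsc : Continuous xs := by
    have := hC xs hxsdiff 0 (by norm_num); rwa [iteratedDeriv_zero] at this
  have hY0c : Continuous (fun t => x t - xt t) := by
    have hx0 := hC x hxd 0 (by norm_num)
    have hxt0 := hC xt hxtd 0 (by norm_num)
    rw [iteratedDeriv_zero] at hx0 hxt0
    exact hx0.sub hxt0
  have hA_int : IntervalIntegrable (fun t => xs t ⬝ᵥ (v t - vt t)) volume 0 T :=
    dot_ii hxsc.continuousOn hu_int
  have hB_int : IntervalIntegrable (fun t => (x t - xt t) ⬝ᵥ w t) volume 0 T :=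
    dot_ii hY0c.continuousOn hw
  have hae : ∀ᵐ t ∂(volume.restrict (Icc (0:ℝ) T)),
      0 ≤ -(xs t ⬝ᵥ (v t - vt t) - (x t - xt t) ⬝ᵥ w t) := by
    rw [ae_restrict_iff' measurableSet_Icc]
    filter_upwards [hl, h1, hxcon] with t h₁ h₂ h₃ ht
    obtain ⟨hadj, hcs⟩ := h₂ ht
    have hlt := h₁ ht
    have hle := h₃ ht
    have hwt : w t = -(Aᵀ *ᵥ l t) := by rw [← hadj, neg_neg]
    have key : ∀ (M : Matrix (Fin m) (Fin n) ℝ) (z : Fin n → ℝ),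
        (Mᵀ *ᵥ l t) ⬝ᵥ z = l t ⬝ᵥ (M *ᵥ z) := by
      intro M z
      rw [Matrix.mulVec_transpose, ← Matrix.dotProduct_mulVec]
    have e1 : xs t ⬝ᵥ (v t - vt t)
        = -(l t ⬝ᵥ (E *ᵥ v t) - l t ⬝ᵥ (E *ᵥ vt t)) := by
      rw [hxsdef t, neg_dotProduct, key, Matrix.mulVec_sub, dotProduct_sub]
    have e2 : (x t - xt t) ⬝ᵥ w t
        = -(l t ⬝ᵥ (A *ᵥ x t) - l t ⬝ᵥ (A *ᵥ xt t)) := by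
      rw [hwt, dotProduct_neg, dotProduct_comm, key, Matrix.mulVec_sub,
        dotProduct_sub]
    have hcs' : (A *ᵥ xt t) ⬝ᵥ l t - (E *ᵥ vt t) ⬝ᵥ l t - d ⬝ᵥ l t = 0 := by
      rw [sub_dotProduct, sub_dotProduct] at hcs
      exact hcs
    have hfirst : l t ⬝ᵥ (A *ᵥ x t - E *ᵥ v t - d) ≤ 0 := by
      have hform : l t ⬝ᵥ (A *ᵥ x t - E *ᵥ v t - d)
          = ∑ i, l t i * (A *ᵥ x t - E *ᵥ v t - d) i := rfl
      rw [hform]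
      refine Finset.sum_nonpos fun i _ => ?_
      have hz : (A *ᵥ x t - E *ᵥ v t - d) i ≤ 0 := by
        have h := hle i
        simp only [Pi.sub_apply] at h ⊢
        linarith
      exact mul_nonpos_of_nonneg_of_nonpos (hlt i) hz
    have hexp : l t ⬝ᵥ (A *ᵥ x t - E *ᵥ v t - d)
        = l t ⬝ᵥ (A *ᵥ x t) - l t ⬝ᵥ (E *ᵥ v t) - l t ⬝ᵥ d := by
      rw [dotProduct_sub, dotProduct_sub]
    have c1 : l t ⬝ᵥ (A *ᵥ xt t) = (A *ᵥ xt t) ⬝ᵥ l t := dotProduct_comm _ _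
    have c2 : l t ⬝ᵥ (E *ᵥ vt t) = (E *ᵥ vt t) ⬝ᵥ l t := dotProduct_comm _ _
    have c3 : l t ⬝ᵥ d = d ⬝ᵥ l t := dotProduct_comm _ _
    rw [e1, e2]
    rw [hexp] at hfirst
    linarith
  have hInonpos : (∫ t in (0:ℝ)..T, xs t ⬝ᵥ (v t - vt t))
      - (∫ t in (0:ℝ)..T, (x t - xt t) ⬝ᵥ w t) ≤ 0 := by
    have hsplit : ∫ t in (0:ℝ)..T, (xs t ⬝ᵥ (v t - vt t) - (x t - xt t) ⬝ᵥ w t)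
        = (∫ t in (0:ℝ)..T, xs t ⬝ᵥ (v t - vt t))
          - ∫ t in (0:ℝ)..T, (x t - xt t) ⬝ᵥ w t :=
      intervalIntegral.integral_sub hA_int hB_int
    have hneg : 0 ≤ ∫ t in (0:ℝ)..T, -(xs t ⬝ᵥ (v t - vt t) - (x t - xt t) ⬝ᵥ w t) :=
      intervalIntegral.integral_nonneg_of_ae_restrict hT.le hae
    rw [intervalIntegral.integral_neg, hsplit] at hneg
    linarith
  -- boundary inequalities from h2'
  have hq0 := h2' 0 (by norm_num) (iteratedDeriv 3 x 0, iteratedDeriv 3 x T) (hxS 3 (by norm_num))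
  have hq1 := h2' 1 (by norm_num) (iteratedDeriv 2 x 0, iteratedDeriv 2 x T) (hxS 2 (by norm_num))
  have hq2 := h2' 2 (by norm_num) (iteratedDeriv 1 x 0, iteratedDeriv 1 x T) (hxS 1 (by norm_num))
  norm_num [iteratedDeriv_zero, dotProduct_smul, smul_eq_mul] at hq0 hq1 hq2
  have g0T : xs T ⬝ᵥ (iteratedDeriv 3 x T - iteratedDeriv 3 xt T)
      = iteratedDeriv 3 x T ⬝ᵥ xs T - iteratedDeriv 3 xt T ⬝ᵥ xs T := by
    rw [dotProduct_comm, sub_dotProduct]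
  have g0Z : xs 0 ⬝ᵥ (iteratedDeriv 3 x 0 - iteratedDeriv 3 xt 0)
      = iteratedDeriv 3 x 0 ⬝ᵥ xs 0 - iteratedDeriv 3 xt 0 ⬝ᵥ xs 0 := by
    rw [dotProduct_comm, sub_dotProduct]
  have g1T : iteratedDeriv 1 xs T ⬝ᵥ (iteratedDeriv 2 x T - iteratedDeriv 2 xt T)
      = iteratedDeriv 2 x T ⬝ᵥ deriv xs T - iteratedDeriv 2 xt T ⬝ᵥ deriv xs T := by
    rw [iteratedDeriv_one, dotProduct_comm, sub_dotProduct]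
  have g1Z : iteratedDeriv 1 xs 0 ⬝ᵥ (iteratedDeriv 2 x 0 - iteratedDeriv 2 xt 0)
      = iteratedDeriv 2 x 0 ⬝ᵥ deriv xs 0 - iteratedDeriv 2 xt 0 ⬝ᵥ deriv xs 0 := by
    rw [iteratedDeriv_one, dotProduct_comm, sub_dotProduct]
  have g2T : iteratedDeriv 2 xs T ⬝ᵥ (iteratedDeriv 1 x T - iteratedDeriv 1 xt T)
      = deriv x T ⬝ᵥ iteratedDeriv 2 xs T - deriv xt T ⬝ᵥ iteratedDeriv 2 xs T := by
    rw [dotProduct_comm, sub_dotProduct, iteratedDeriv_one, iteratedDeriv_one]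
  have g2Z : iteratedDeriv 2 xs 0 ⬝ᵥ (iteratedDeriv 1 x 0 - iteratedDeriv 1 xt 0)
      = deriv x 0 ⬝ᵥ iteratedDeriv 2 xs 0 - deriv xt 0 ⬝ᵥ iteratedDeriv 2 xs 0 := by
    rw [dotProduct_comm, sub_dotProduct, iteratedDeriv_one, iteratedDeriv_one]
  have hB3 : 0 ≤ (x T - xt T) ⬝ᵥ iteratedDeriv 3 xs T
      - (x 0 - xt 0) ⬝ᵥ iteratedDeriv 3 xs 0 := by
    linarith [hkey, hInonpos, hq0, hq1, hq2, g0T, g0Z, g1T, g1Z, g2T, g2Z]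
  have hS0 : (x 0, x T) ∈ S := by
    have := hxS 0 (by norm_num)
    simpa using this
  have hmu' : 0 ≤ (x 0 - xt 0) ⬝ᵥ μ₀ + (x T - xt T) ⬝ᵥ μ₁ := hμ (x 0, x T) hS0
  have hfin := hsubg (x 0) (x T)
  have hp0' : p₀ = μ₀ - iteratedDeriv 3 xs 0 := by linear_combination -hp0
  have hp1' : p₁ = μ₁ + iteratedDeriv 3 xs T := by linear_combination -hp1
  have hexp2 : p₀ ⬝ᵥ (x 0 - xt 0) + p₁ ⬝ᵥ (x T - xt T)
      = ((x 0 - xt 0) ⬝ᵥ μ₀ + (x T - xt T) ⬝ᵥ μ₁)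
        + ((x T - xt T) ⬝ᵥ iteratedDeriv 3 xs T - (x 0 - xt 0) ⬝ᵥ iteratedDeriv 3 xs 0) := by
    rw [hp0', hp1', sub_dotProduct, add_dotProduct,
      dotProduct_comm μ₀ (x 0 - xt 0), dotProduct_comm μ₁ (x T - xt T),
      dotProduct_comm (iteratedDeriv 3 xs 0) (x 0 - xt 0),
      dotProduct_comm (iteratedDeriv 3 xs T) (x T - xt T)]
    ring
  linarith [hfin, hmu', hB3, hexp2]
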